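/- Let X be a nonempty type, Z = X × {0,1}, and let λ = (λ₀, λ₁) be a binary loss function that is proper and η-mixable for some η > 0, with λ₀ and λ₁ continuous on [0,1]. Let F : Z* × X → (0,1) be a prediction strategy and let L be a superloss process under λ such that Loss^λ_F is finite on all finite sequences. Then the function σ ↦ η·L(σ) + Loss^ln_F(σ) − η·Loss^λ_F(σ) is a superloss process under the log loss function. -/

import Mathlib

open Set

/-- `e^{-c}` for `c ∈ [0,∞]`, with the convention `e^{-∞} = 0`. -/
noncomputable def expNeg (c : ENNReal) : ℝ :=
  if c = ⊤ then 0 else Real.exp (-c.toReal)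

/-- A loss function as a map `[0,1] × {0,1} → [0,∞]`; `lam p true` is `λ₁(p)` and
`lam p false` is `λ₀(p)`. -/
structure IsLossFunction (lam : ℝ → Bool → ENNReal) : Prop where
  zero0 : lam 0 false = 0
  zero1 : lam 1 true = 0
  mono0 : MonotoneOn (fun p => lam p false) (Icc 0 1)
  anti1 : AntitoneOn (fun p => lam p true) (Icc 0 1)
  finite0 : ∀ p ∈ Ioo (0:ℝ) 1, lam p false ≠ ⊤
  finite1 : ∀ p ∈ Ioo (0:ℝ) 1, lam p true ≠ ⊤

def IsProper (lam : ℝ → Bool → ENNReal) : Prop :=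
  ∀ p ∈ Icc (0:ℝ) 1, ∀ q ∈ Icc (0:ℝ) 1,
    ENNReal.ofReal p * lam p true + ENNReal.ofReal (1 - p) * lam p false ≤
      ENNReal.ofReal p * lam q true + ENNReal.ofReal (1 - p) * lam q false

def IsMixable (lam : ℝ → Bool → ENNReal) (η : ℝ) : Prop :=
  Convex ℝ {x : ℝ × ℝ | x.1 ∈ Icc (0:ℝ) 1 ∧ x.2 ∈ Icc (0:ℝ) 1 ∧
    ∃ p ∈ Icc (0:ℝ) 1,
      x.1 ≤ expNeg (ENNReal.ofReal η * lam p false) ∧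
      x.2 ≤ expNeg (ENNReal.ofReal η * lam p true)}

/-- The log loss function, with `-ln 0 = ∞`. -/
noncomputable def logLoss : ℝ → Bool → ENNReal := fun p y =>
  if y then (if p = 0 then ⊤ else ENNReal.ofReal (-Real.log p))
  else (if p = 1 then ⊤ else ENNReal.ofReal (-Real.log (1 - p)))

/-- The cumulative loss `Loss^λ_F(z₁…z_T) = Σ_t λ(F(z₁…z_{t-1}, x_t), y_t)` of a
prediction strategy `F` on a finite data sequence, as an extended real. -/
noncomputable def cumLoss {X : Type*} (lam : ℝ → Bool → ENNReal)
    (F : List (X × Bool) → X → ℝ) (σ : List (X × Bool)) : EReal :=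
  ∑ i : Fin σ.length, ((lam (F (σ.take i) (σ.get i).1) (σ.get i).2 : ENNReal) : EReal)

/-- `L : Z* → ℝ ∪ {∞}` is a superloss process under `lam`. -/
def IsSuperlossProcess {X : Type*} (lam : ℝ → Bool → ENNReal)
    (L : List (X × Bool) → EReal) : Prop :=
  L [] = 0 ∧ ∀ σ : List (X × Bool), ∀ x : X, ∃ p ∈ Icc (0:ℝ) 1, ∀ y : Bool,
    L (σ ++ [(x, y)]) ≥ L σ + (lam p y : EReal)

/-!
On a round where `F` forecasts `f ∈ (0,1)` and the superloss process `L` is backed by the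
forecast `p`, predict `g = f e^{-ηλ₁(p)} / e^{-ηλ₁(f)}` under log loss. On outcome `1` the log
loss of `g` is exactly `-ln f + ηλ₁(p) - ηλ₁(f)`. On outcome `0`, `-ln (1 - g)` is at most
`-ln (1 - f) + ηλ₀(p) - ηλ₀(f)` because
`f e^{-ηλ₁(p)} / e^{-ηλ₁(f)} + (1 - f) e^{-ηλ₀(p)} / e^{-ηλ₀(f)} ≤ 1`, which is where
mixability and properness enter. Adding `η` times the superloss inequality of `L` gives the
superloss inequality of `ηL + Loss^ln_F - ηLoss^λ_F`.
-/

open Filter Topology Real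

lemma HasDerivWithinAt.nonpos_of_eventually_le {φ : ℝ → ℝ} {δ a : ℝ}
    (hφ : HasDerivWithinAt φ δ (Ioi a) a) (h : ∀ᶠ t in 𝓝[>] a, φ t ≤ φ a) : δ ≤ 0 := by
  refine le_of_tendsto ((hasDerivWithinAt_iff_tendsto_slope' (by simp)).1 hφ) ?_
  filter_upwards [h, self_mem_nhdsWithin] with t ht hat
  rw [slope_def_field]
  exact div_nonpos_of_nonpos_of_nonneg (sub_nonpos.2 ht) (sub_nonneg.2 (le_of_lt hat))

/-- The right derivative at `t = 0` of the left-hand side of `h` is the left-hand side of the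
conclusion minus one. -/
lemma weighted_ratio_le_one_of_log_le {f A B a b : ℝ} (hA : 0 < A) (hB : 0 < B)
    (h : ∀ t ∈ Ioo (0:ℝ) 1, f * log ((1 - t) * B + t * b) + (1 - f) * log ((1 - t) * A + t * a)
      ≤ f * log B + (1 - f) * log A) :
    f * b / B + (1 - f) * a / A ≤ 1 := by
  have hsegment (c d : ℝ) : HasDerivAt (fun t => (1 - t) * c + t * d) (d - c) 0 :=
    (((hasDerivAt_id 0).const_sub 1).mul_const c |>.add
      ((hasDerivAt_id 0).mul_const d)).congr_deriv (by ring)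
  have hφ := (((hsegment B b).log (by simpa using hB.ne')).const_mul f).add
    (((hsegment A a).log (by simpa using hA.ne')).const_mul (1 - f))
  have hδ := hφ.hasDerivWithinAt.nonpos_of_eventually_le <|
    eventually_of_mem (Ioo_mem_nhdsGT one_pos) fun t ht => by simpa using h t ht
  simp only [sub_zero, one_mul, zero_mul, add_zero] at hδ
  field_simp at hδ ⊢
  linarith

section LossFunction

variable {lam : ℝ → Bool → ENNReal} {η : ℝ}

noncomputable def expLoss (lam : ℝ → Bool → ENNReal) (η p : ℝ) (y : Bool) : ℝ :=
  expNeg (ENNReal.ofReal η * lam p y)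

lemma expLoss_nonneg (p : ℝ) (y : Bool) : 0 ≤ expLoss lam η p y := by
  unfold expLoss expNeg
  split_ifs
  exacts [le_rfl, (exp_pos _).le]

lemma expLoss_le_one (p : ℝ) (y : Bool) : expLoss lam η p y ≤ 1 := by
  unfold expLoss expNeg
  split_ifs
  exacts [zero_le_one, exp_le_one_iff.2 (neg_nonpos.2 ENNReal.toReal_nonneg)]

lemma expLoss_of_ne_top (hη : 0 ≤ η) {p : ℝ} {y : Bool} (h : lam p y ≠ ⊤) :
    expLoss lam η p y = exp (-(η * (lam p y).toReal)) := by
  rw [expLoss, expNeg, if_neg (by finiteness), ENNReal.toReal_mul, ENNReal.toReal_ofReal hη]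

lemma expLoss_pos (hη : 0 ≤ η) {p : ℝ} {y : Bool} (h : lam p y ≠ ⊤) :
    0 < expLoss lam η p y := by
  rw [expLoss_of_ne_top hη h]
  exact exp_pos _

lemma log_expLoss (hη : 0 ≤ η) {p : ℝ} {y : Bool} (h : lam p y ≠ ⊤) :
    log (expLoss lam η p y) = -(η * (lam p y).toReal) := by
  rw [expLoss_of_ne_top hη h, log_exp]

lemma ne_top_of_expLoss_pos (hη : 0 < η) {p : ℝ} {y : Bool} (h : 0 < expLoss lam η p y) :
    lam p y ≠ ⊤ := by
  rintro hp
  simp [expLoss, expNeg, hp, ENNReal.mul_top, hη] at h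

lemma IsLossFunction.ne_top (hloss : IsLossFunction lam) {p : ℝ} (hp : p ∈ Ioo 0 1)
    (y : Bool) : lam p y ≠ ⊤ := by
  cases y
  exacts [hloss.finite0 p hp, hloss.finite1 p hp]

lemma IsMixable.exists_ge_segment (hmix : IsMixable lam η) {p₁ p₂ t : ℝ} (hp₁ : p₁ ∈ Icc 0 1)
    (hp₂ : p₂ ∈ Icc 0 1) (ht : t ∈ Icc (0:ℝ) 1) :
    ∃ q ∈ Icc (0:ℝ) 1, ∀ y,
      (1 - t) * expLoss lam η p₁ y + t * expLoss lam η p₂ y ≤ expLoss lam η q y := by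
  have hmem {p : ℝ} (hp : p ∈ Icc 0 1) : (expLoss lam η p false, expLoss lam η p true) ∈
      {x : ℝ × ℝ | x.1 ∈ Icc (0:ℝ) 1 ∧ x.2 ∈ Icc (0:ℝ) 1 ∧ ∃ p ∈ Icc (0:ℝ) 1,
        x.1 ≤ expNeg (ENNReal.ofReal η * lam p false) ∧
        x.2 ≤ expNeg (ENNReal.ofReal η * lam p true)} :=
    ⟨⟨expLoss_nonneg _ _, expLoss_le_one _ _⟩, ⟨expLoss_nonneg _ _, expLoss_le_one _ _⟩,
      p, hp, le_rfl, le_rfl⟩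
  obtain ⟨-, -, q, hq, h0, h1⟩ :=
    hmix (hmem hp₁) (hmem hp₂) (sub_nonneg.2 ht.2) ht.1 (by ring)
  exact ⟨q, hq, fun y => by cases y; exacts [h0, h1]⟩

lemma IsProper.toReal_le (hproper : IsProper lam) {p q : ℝ} (hp : p ∈ Icc 0 1)
    (hp_fin : ∀ y, lam p y ≠ ⊤) (hq : q ∈ Icc 0 1) (hq_fin : ∀ y, lam q y ≠ ⊤) :
    p * (lam p true).toReal + (1 - p) * (lam p false).toReal ≤
      p * (lam q true).toReal + (1 - p) * (lam q false).toReal := by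
  have h := ENNReal.toReal_mono (by simp [ENNReal.mul_eq_top, hq_fin]) (hproper p hp q hq)
  simpa [ENNReal.toReal_add, ENNReal.mul_eq_top, hp_fin, hq_fin, ENNReal.toReal_ofReal hp.1,
    ENNReal.toReal_ofReal (sub_nonneg.2 hp.2)] using h

/-- By mixability every point of the segment from `(e^{-ηλ₀(f)}, e^{-ηλ₁(f)})` to
`(e^{-ηλ₀(p)}, e^{-ηλ₁(p)})` is dominated by the point of some forecast `q`; by properness no
such `q` has smaller expected loss under `f` than `f` itself. So the expected log of the
segment is maximal at its endpoint `f`, and the conclusion is its derivative there. -/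
lemma IsProper.expLoss_ratio_le_one (hη : 0 < η) (hproper : IsProper lam)
    (hmix : IsMixable lam η) {f p : ℝ} (hf : f ∈ Icc 0 1) (hf_fin : ∀ y, lam f y ≠ ⊤)
    (hp : p ∈ Icc 0 1) :
    f * expLoss lam η p true / expLoss lam η f true +
      (1 - f) * expLoss lam η p false / expLoss lam η f false ≤ 1 := by
  refine weighted_ratio_le_one_of_log_le (expLoss_pos hη.le (hf_fin _))
    (expLoss_pos hη.le (hf_fin _)) fun t ht => ?_
  obtain ⟨q, hq, hdom⟩ := hmix.exists_ge_segment hf hp (Ioo_subset_Icc_self ht)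
  have hseg_pos (y : Bool) : 0 < (1 - t) * expLoss lam η f y + t * expLoss lam η p y :=
    add_pos_of_pos_of_nonneg (mul_pos (sub_pos.2 ht.2) (expLoss_pos hη.le (hf_fin y)))
      (mul_nonneg ht.1.le (expLoss_nonneg _ _))
  have hq_fin (y : Bool) : lam q y ≠ ⊤ :=
    ne_top_of_expLoss_pos hη ((hseg_pos y).trans_le (hdom y))
  have hlog (y : Bool) :
      log ((1 - t) * expLoss lam η f y + t * expLoss lam η p y) ≤ -(η * (lam q y).toReal) :=
    (log_le_log (hseg_pos y) (hdom y)).trans_eq (log_expLoss hη.le (hq_fin y))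
  have h1 := mul_le_mul_of_nonneg_left (hlog true) hf.1
  have h0 := mul_le_mul_of_nonneg_left (hlog false) (sub_nonneg.2 hf.2)
  have hprop := mul_le_mul_of_nonneg_left (hproper.toReal_le hf hf_fin hq hq_fin) hη.le
  rw [log_expLoss hη.le (hf_fin true), log_expLoss hη.le (hf_fin false)]
  linarith

end LossFunction

def predProb (p : ℝ) (y : Bool) : ℝ := if y then p else 1 - p

lemma predProb_pos {p : ℝ} (hp : p ∈ Ioo 0 1) (y : Bool) : 0 < predProb p y := by
  cases y
  exacts [sub_pos.2 hp.2, hp.1]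

lemma predProb_le_one {p : ℝ} (hp : p ∈ Icc 0 1) (y : Bool) : predProb p y ≤ 1 := by
  cases y
  exacts [sub_le_self _ hp.1, hp.2]

lemma logLoss_eq (p : ℝ) (y : Bool) :
    logLoss p y = if predProb p y = 0 then ⊤ else ENNReal.ofReal (-log (predProb p y)) := by
  cases y <;> simp [logLoss, predProb, sub_eq_zero, eq_comm (b := (1:ℝ))]

lemma coe_logLoss_le {p w : ℝ} {y : Bool} (hp : p ∈ Icc 0 1) (hw : 0 < w)
    (hwp : w ≤ predProb p y) : (logLoss p y : EReal) ≤ ((-log w : ℝ) : EReal) := by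
  rw [logLoss_eq, if_neg (hw.trans_le hwp).ne', EReal.coe_ennreal_ofReal, EReal.coe_le_coe_iff]
  exact max_le (neg_le_neg (log_le_log hw hwp))
    (neg_nonneg.2 (log_nonpos hw.le (hwp.trans (predProb_le_one hp y))))

lemma coe_logLoss_of_mem_Ioo {p : ℝ} (hp : p ∈ Ioo 0 1) (y : Bool) :
    (logLoss p y : EReal) = ((-log (predProb p y) : ℝ) : EReal) := by
  rw [logLoss_eq, if_neg (predProb_pos hp y).ne', EReal.coe_ennreal_ofReal, max_eq_left]
  exact neg_nonneg.2
    (log_nonpos (predProb_pos hp y).le (predProb_le_one (Ioo_subset_Icc_self hp) y))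

lemma logLoss_ne_top {p : ℝ} (hp : p ∈ Ioo 0 1) (y : Bool) : logLoss p y ≠ ⊤ := by
  rw [logLoss_eq, if_neg (predProb_pos hp y).ne']
  exact ENNReal.ofReal_ne_top

section LogPred

variable {lam : ℝ → Bool → ENNReal} {η f p : ℝ}

noncomputable def logPred (lam : ℝ → Bool → ENNReal) (η f p : ℝ) : ℝ :=
  f * expLoss lam η p true / expLoss lam η f true

lemma logPred_mem_Icc (hη : 0 < η) (hproper : IsProper lam) (hmix : IsMixable lam η)
    (hf : f ∈ Icc 0 1) (hf_fin : ∀ y, lam f y ≠ ⊤) (hp : p ∈ Icc 0 1) :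
    logPred lam η f p ∈ Icc 0 1 := by
  have hratio := hproper.expLoss_ratio_le_one hη hmix hf hf_fin hp
  have hfalse : 0 ≤ (1 - f) * expLoss lam η p false / expLoss lam η f false :=
    div_nonneg (mul_nonneg (sub_nonneg.2 hf.2) (expLoss_nonneg _ _)) (expLoss_nonneg _ _)
  exact ⟨div_nonneg (mul_nonneg hf.1 (expLoss_nonneg _ _)) (expLoss_nonneg _ _),
    by rw [logPred]; linarith⟩

lemma predProb_mul_expLoss_div_le (hη : 0 < η) (hproper : IsProper lam)
    (hmix : IsMixable lam η) (hf : f ∈ Icc 0 1) (hf_fin : ∀ y, lam f y ≠ ⊤)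
    (hp : p ∈ Icc 0 1) (y : Bool) :
    predProb f y * expLoss lam η p y / expLoss lam η f y ≤ predProb (logPred lam η f p) y := by
  have hratio := hproper.expLoss_ratio_le_one hη hmix hf hf_fin hp
  cases y
  · simp only [predProb, logPred, Bool.false_eq_true, if_false]
    linarith
  · exact le_rfl

lemma coe_logLoss_logPred_le (hη : 0 < η) (hproper : IsProper lam) (hmix : IsMixable lam η)
    (hf : f ∈ Ioo 0 1) (hf_fin : ∀ y, lam f y ≠ ⊤) (hp : p ∈ Icc 0 1) {y : Bool}
    (hpy : lam p y ≠ ⊤) :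
    (logLoss (logPred lam η f p) y : EReal) ≤
      ((-log (predProb f y) + η * (lam p y).toReal - η * (lam f y).toReal : ℝ) : EReal) := by
  have hf' := Ioo_subset_Icc_self hf
  have hprod := mul_pos (predProb_pos hf y) (expLoss_pos hη.le hpy)
  calc (logLoss (logPred lam η f p) y : EReal)
      ≤ ((-log (predProb f y * expLoss lam η p y / expLoss lam η f y) : ℝ) : EReal) :=
        coe_logLoss_le (logPred_mem_Icc hη hproper hmix hf' hf_fin hp)
          (div_pos hprod (expLoss_pos hη.le (hf_fin y)))
          (predProb_mul_expLoss_div_le hη hproper hmix hf' hf_fin hp y)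
    _ = _ := by
        rw [log_div hprod.ne' (expLoss_pos hη.le (hf_fin y)).ne',
          log_mul (predProb_pos hf y).ne' (expLoss_pos hη.le hpy).ne', log_expLoss hη.le hpy,
          log_expLoss hη.le (hf_fin y)]
        congr 1
        ring

end LogPred

section Processes

variable {X : Type*} {lam : ℝ → Bool → ENNReal}

lemma IsSuperlossProcess.nonneg {L : List (X × Bool) → EReal} (hL : IsSuperlossProcess lam L)
    (σ : List (X × Bool)) : 0 ≤ L σ := by
  induction σ using List.reverseRecOn with
  | nil => exact hL.1.ge
  | append_singleton σ z ih =>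
    obtain ⟨p, -, hp⟩ := hL.2 σ z.1
    exact (add_nonneg ih (EReal.coe_ennreal_nonneg _)).trans (hp z.2)

variable (lam) (F : List (X × Bool) → X → ℝ)

@[simp]
lemma cumLoss_nil : cumLoss lam F [] = 0 := by
  simp [cumLoss]

lemma cumLoss_append_singleton (σ : List (X × Bool)) (x : X) (y : Bool) :
    cumLoss lam F (σ ++ [(x, y)]) = cumLoss lam F σ + (lam (F σ x) y : EReal) := by
  unfold cumLoss
  have h : (σ ++ [(x, y)]).length = σ.length + 1 := by simp
  rw [← Fin.sum_congr' _ h.symm, Fin.sum_univ_castSucc]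
  congr 1
  · refine Finset.sum_congr rfl fun i _ => ?_
    have hi : (i : ℕ) < σ.length := i.isLt
    simp only [Fin.val_cast, Fin.val_castSucc, List.get_eq_getElem,
      List.getElem_append_left hi, List.take_append_of_le_length hi.le]
  · simp [List.getElem_append_right]

lemma exists_cumLoss_eq_coe (h : ∀ τ x y, lam (F τ x) y ≠ ⊤) (σ : List (X × Bool)) :
    ∃ r : ℝ, cumLoss lam F σ = r := by
  induction σ using List.reverseRecOn with
  | nil => exact ⟨0, cumLoss_nil lam F⟩
  | append_singleton σ z ih =>
    obtain ⟨r, hr⟩ := ih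
    refine ⟨r + (lam (F σ z.1) z.2).toReal, ?_⟩
    rw [cumLoss_append_singleton, hr, EReal.coe_add, EReal.coe_ennreal_toReal (h _ _ _)]

end Processes

/-- One round of `ηL + Loss^ln_F - ηLoss^λ_F`: `l, l'` are the values of `L` before and after
it, `D, C` those of `Loss^ln_F, Loss^λ_F` before it and `ℓ, r` their increments. -/
lemma linearCombination_step_le {η : ℝ} (hη : 0 < η) {l l' k : EReal} {e : ENNReal}
    (hl : 0 ≤ l) (hstep : l + e ≤ l') (D C ℓ r : ℝ)
    (hk : e ≠ ⊤ → k ≤ ((ℓ + η * e.toReal - η * r : ℝ) : EReal)) :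
    η * l + D - η * C + k ≤ η * l' + (D + ℓ) - η * (C + r) := by
  have hl_bot : l ≠ ⊥ := (EReal.bot_lt_zero.trans_le hl).ne'
  induction l' using EReal.rec with
  | bot =>
    exact absurd ((add_nonneg hl (EReal.coe_ennreal_nonneg e)).trans hstep) (by simp)
  | top =>
    rw [EReal.coe_mul_top_of_pos hη, ← EReal.coe_add D ℓ, EReal.top_add_coe,
      ← EReal.coe_add C r, ← EReal.coe_mul η (C + r), EReal.top_sub_coe]
    exact le_top
  | coe b =>
    have he : e ≠ ⊤ := by
      rintro rfl
      simp [EReal.add_top_of_ne_bot hl_bot] at hstep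
    induction l using EReal.rec with
    | bot => exact (hl_bot rfl).elim
    | top => simp [EReal.top_add_of_ne_bot] at hstep
    | coe a =>
      rw [← EReal.coe_ennreal_toReal he] at hstep
      have hab : a + e.toReal ≤ b := by exact_mod_cast hstep
      calc (η : EReal) * a + D - η * C + k
          ≤ ((η * a + D - η * C : ℝ) : EReal) + ((ℓ + η * e.toReal - η * r : ℝ) : EReal) :=
            add_le_add (by norm_cast) (hk he)
        _ ≤ _ := by
            norm_cast
            nlinarith [mul_le_mul_of_nonneg_left hab hη.le]

theorem superloss_log_of_superloss_general {X : Type*}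
    (lam : ℝ → Bool → ENNReal) (η : ℝ) (hη : 0 < η)
    (hloss : IsLossFunction lam) (hproper : IsProper lam) (hmix : IsMixable lam η)
    (F : List (X × Bool) → X → ℝ) (hF : ∀ σ x, F σ x ∈ Ioo (0:ℝ) 1)
    (L : List (X × Bool) → EReal) (hL : IsSuperlossProcess lam L) :
    IsSuperlossProcess logLoss
      (fun σ => (η : EReal) * L σ + cumLoss logLoss F σ - (η : EReal) * cumLoss lam F σ) := by
  refine ⟨by simp [hL.1], fun σ x => ?_⟩
  obtain ⟨p, hp, hstep⟩ := hL.2 σ x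
  have hf := hF σ x
  have hf_fin := hloss.ne_top hf
  refine ⟨logPred lam η (F σ x) p,
    logPred_mem_Icc hη hproper hmix (Ioo_subset_Icc_self hf) hf_fin hp, fun y => ?_⟩
  obtain ⟨D, hD⟩ := exists_cumLoss_eq_coe logLoss F (fun τ x => logLoss_ne_top (hF τ x)) σ
  obtain ⟨C, hC⟩ := exists_cumLoss_eq_coe lam F (fun τ x => hloss.ne_top (hF τ x)) σ
  dsimp only
  rw [cumLoss_append_singleton, cumLoss_append_singleton, hD, hC, coe_logLoss_of_mem_Ioo hf,
    ← EReal.coe_ennreal_toReal (hf_fin y)]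
  exact linearCombination_step_le hη (hL.nonneg σ) (hstep y) D C _ _
    fun hpy => coe_logLoss_logPred_le hη hproper hmix hf hf_fin hp hpy

/-- If `lam` is a proper `η`-mixable loss function continuous on `[0,1]`, `F` is a
prediction strategy with values in `(0,1)`, and `L` is a superloss process under `lam`
with `Loss^λ_F` finite, then `η·L + Loss^ln_F - η·Loss^λ_F` is a superloss process under
the log loss function. -/
theorem superloss_log_of_superloss {X : Type*} [Nonempty X]
    (lam : ℝ → Bool → ENNReal) (η : ℝ) (hη : 0 < η)
    (hloss : IsLossFunction lam) (hproper : IsProper lam) (hmix : IsMixable lam η)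
    (hcont0 : ContinuousOn (fun p => lam p false) (Icc 0 1))
    (hcont1 : ContinuousOn (fun p => lam p true) (Icc 0 1))
    (F : List (X × Bool) → X → ℝ) (hF : ∀ σ x, F σ x ∈ Ioo (0:ℝ) 1)
    (L : List (X × Bool) → EReal) (hL : IsSuperlossProcess lam L)
    (hfin : ∀ σ : List (X × Bool), cumLoss lam F σ ≠ ⊤) :
    IsSuperlossProcess logLoss
      (fun σ => (η : EReal) * L σ + cumLoss logLoss F σ - (η : EReal) * cumLoss lam F σ) :=
  superloss_log_of_superloss_general lam η hη hloss hproper hmix F hF L hL
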